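/- arXiv:1010.3129 — 2 statements merged into one kernel-verified Lean document; each statement's English description precedes it below -/
import Mathlib

section
/- Let W be a finite set, let λ : W → ℂ be injective, let W_i ⊆ W and V ⊆ W. Assume that for every pair of elements a, b ∈ W_i, the sum of λ over the image of V under the transposition of W swapping a and b equals the sum of λ over V. If V ∩ W_i is nonempty, then W_i ⊆ V. -/
/-- Combinatorial core of Theorem 4.1: if the sum of an injective function `lam` over `V`
is invariant under every transposition of two elements of `Wi`, and `V` meets `Wi`,
then `Wi ⊆ V`. -/
theorem witness_subset_of_swap_invariant_sum
    {W : Type*} [Fintype W] [DecidableEq W]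
    (lam : W → ℂ) (hlam : Function.Injective lam)
    (Wi V : Finset W)
    (hswap : ∀ a ∈ Wi, ∀ b ∈ Wi,
      (∑ v ∈ V.image (Equiv.swap a b), lam v) = ∑ v ∈ V, lam v)
    (hne : (V ∩ Wi).Nonempty) :
    Wi ⊆ V := by
  obtain ⟨a, ha⟩ := hne
  rw [Finset.mem_inter] at ha
  obtain ⟨haV, haWi⟩ := ha
  intro b hb
  by_contra hbV
  have h := hswap a haWi b hb
  rw [Finset.sum_image (fun x _ y _ h => (Equiv.swap a b).injective h)] at h
  have hab : a ≠ b := fun e => hbV (e ▸ haV)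
  rw [← Finset.sum_erase_add V _ haV] at h
  have hrest : ∑ v ∈ V.erase a, lam (Equiv.swap a b v) = ∑ v ∈ V.erase a, lam v := by
    apply Finset.sum_congr rfl
    intro v hv
    have hva : v ≠ a := Finset.ne_of_mem_erase hv
    have hvb : v ≠ b := fun e => hbV (e ▸ Finset.mem_of_mem_erase hv)
    rw [Equiv.swap_apply_of_ne_of_ne hva hvb]
  rw [hrest, ← Finset.sum_erase_add V lam haV, add_left_cancel_iff, Equiv.swap_apply_left] at h
  exact hab (hlam h).symm
end

section
/- Let W be a finite set, λ : W → ℂ injective, and let G be a group acting on W. Suppose W_i ⊆ W is such that for all a, b ∈ W_i there exists g ∈ G whose action on W swaps a and b and fixes every other element of W. If V ⊆ W satisfies Σ_{v ∈ V} λ(g • v) = Σ_{v ∈ V} λ(v) for every g ∈ G, and V ∩ W_i ≠ ∅, then W_i ⊆ V. -/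
/-- Theorem 4.1 in terms of a monodromy group action: if for any two points of `Wi`
some group element acts as the transposition swapping them (fixing everything else),
and the sum of an injective function `lam` over `V` is invariant under the action,
then `V ∩ Wi ≠ ∅` implies `Wi ⊆ V`. -/
theorem witness_subset_of_monodromy_invariant_sum
    {W : Type*} [Fintype W] [DecidableEq W] {G : Type*} [Group G] [MulAction G W]
    (lam : W → ℂ) (hlam : Function.Injective lam)
    (Wi V : Finset W)
    (hswap : ∀ a ∈ Wi, ∀ b ∈ Wi, ∃ g : G,
      g • a = b ∧ g • b = a ∧ ∀ w : W, w ≠ a → w ≠ b → g • w = w)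
    (hinv : ∀ g : G, (∑ v ∈ V, lam (g • v)) = ∑ v ∈ V, lam v)
    (hne : (V ∩ Wi).Nonempty) :
    Wi ⊆ V := by
  obtain ⟨a, ha⟩ := hne
  rw [Finset.mem_inter] at ha
  obtain ⟨haV, haWi⟩ := ha
  intro b hb
  by_contra hbV
  have hab : a ≠ b := fun h => hbV (h ▸ haV)
  obtain ⟨g, hga, hgb, hg⟩ := hswap a haWi b hb
  have key := hinv g
  have himg : V.image (fun v => g • v) = insert b (V.erase a) := by
    ext w
    simp only [Finset.mem_image, Finset.mem_insert, Finset.mem_erase]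
    constructor
    · rintro ⟨v, hv, rfl⟩
      by_cases h1 : v = a
      · subst h1; exact Or.inl hga
      by_cases h2 : v = b
      · exact absurd (h2 ▸ hv) hbV
      · rw [hg v h1 h2]; exact Or.inr ⟨h1, hv⟩
    · rintro (rfl | ⟨hwa, hwV⟩)
      · exact ⟨a, haV, hga⟩
      · by_cases h2 : w = b
        · exact absurd (h2 ▸ hwV) hbV
        · exact ⟨w, hwV, hg w hwa h2⟩
  have hsum : ∑ v ∈ V, lam (g • v) = ∑ v ∈ V.image (fun v => g • v), lam v := by
    rw [Finset.sum_image]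
    intro x _ y _ h
    exact smul_left_cancel g h
  rw [hsum, himg, Finset.sum_insert (fun h => hbV (Finset.mem_of_mem_erase h)), ← Finset.add_sum_erase V lam haV] at key
  have : lam b = lam a := by
    have := add_right_cancel key
    exact this
  exact hab (hlam this).symm
end
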